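/- Let Q: ℝ² → ℝ be continuous and Λ_h-periodic, let k ∈ ℝ², let Θ: ℝ² → ℝ be smooth and Λ_h-periodic, and let φ: ℝ² → ℂ be smooth and Λ_h-periodic. Then ∫_D conj( H(k)(Θφ)(x) ) · (Θφ)(x) dx = Re( ∫_D Θ(x)² conj( (H(k)φ)(x) ) · φ(x) dx ) + ∫_D |∇Θ(x)|² |φ(x)|² dx, where both sides are integrals over the fundamental domain D. -/

import Mathlib

noncomputable section

open scoped Real

/-- The plane `ℝ²` with the Euclidean norm. -/
abbrev V2 : Type := EuclideanSpace ℝ (Fin 2)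

/-- The vector `(a, b) ∈ ℝ²`. -/
def vec (a b : ℝ) : V2 := WithLp.toLp 2 ![a, b]

/-- The dot product on `ℝ²`. -/
def dot (a b : V2) : ℝ := a 0 * b 0 + a 1 * b 1

/-- `v₁ = (√3/2, 1/2)`. -/
def v1 : V2 := vec (Real.sqrt 3 / 2) (1 / 2)

/-- `v₂ = (√3/2, −1/2)`. -/
def v2 : V2 := vec (Real.sqrt 3 / 2) (-(1 / 2))

/-- The lattice point `m₁ v₁ + m₂ v₂` of `Λ_h`. -/
def lat (m : ℤ × ℤ) : V2 := (m.1 : ℝ) • v1 + (m.2 : ℝ) • v2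

/-- `k₁ = 2π(1/√3, 1)`. -/
def dk1 : V2 := vec (2 * π / Real.sqrt 3) (2 * π)

/-- `k₂ = 2π(1/√3, −1)`. -/
def dk2 : V2 := vec (2 * π / Real.sqrt 3) (-(2 * π))

/-- The dual lattice point `m₁ k₁ + m₂ k₂` of `Λ_h*`. -/
def dlat (m : ℤ × ℤ) : V2 := (m.1 : ℝ) • dk1 + (m.2 : ℝ) • dk2

/-- `K = (0, 4π/3)`. -/
def KK : V2 := vec 0 (4 * π / 3)

/-- Clockwise rotation by `2π/3` about the origin (the matrix `R`). -/
def rotR (x : V2) : V2 :=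
  vec (-(1/2) * x 0 + (Real.sqrt 3 / 2) * x 1) (-(Real.sqrt 3 / 2) * x 0 - (1/2) * x 1)

/-- The transpose `Rᵀ`. -/
def rotRT (x : V2) : V2 :=
  vec (-(1/2) * x 0 - (Real.sqrt 3 / 2) * x 1) ((Real.sqrt 3 / 2) * x 0 - (1/2) * x 1)

/-- Clockwise rotation by `π/3` about the origin (the matrix `R₆₀`). -/
def rot60 (x : V2) : V2 :=
  vec ((1/2) * x 0 + (Real.sqrt 3 / 2) * x 1) (-(Real.sqrt 3 / 2) * x 0 + (1/2) * x 1)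

/-- `e_{A,1} = (1/√3, 0)`. -/
def eA1 : V2 := vec (1 / Real.sqrt 3) 0

/-- `e_{A,ν} = R^{ν−1} e_{A,1}` for `ν = 1, 2, 3` (indexed by `Fin 3`). -/
def eA (ν : Fin 3) : V2 := rotR^[(ν : ℕ)] eA1

/-- `e_{B,ν} = −e_{A,ν}`. -/
def eB (ν : Fin 3) : V2 := -eA ν

/-- `e_{I,ν}` for `I ∈ {A, B}` (`true ↦ A`, `false ↦ B`). -/
def eVec (I : Bool) (ν : Fin 3) : V2 := if I then eA ν else eB ν

/-- `γ(k) = Σ_{ν=1}^3 exp(i k·e_{B,ν})`. -/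
def gam (k : V2) : ℂ := ∑ ν : Fin 3, Complex.exp (Complex.I * (dot k (eB ν)))

/-- `W_TB(k) = |γ(k)|`. -/
def Wtb (k : V2) : ℝ := ‖gam k‖

/-- `v_B = (1/√3, 0)`. -/
def vB : V2 := vec (1 / Real.sqrt 3) 0

/-- The hexagon center `x_c = (1/(2√3), −1/2)`. -/
def xc : V2 := vec (1 / (2 * Real.sqrt 3)) (-(1 / 2))

/-- The rotation operator `ℛ[f](x) = f(x_c + Rᵀ(x − x_c))`. -/
def Rop (f : V2 → ℂ) (x : V2) : ℂ := f (xc + rotRT (x - xc))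

/-- `τ = exp(2πi/3)`. -/
def tau : ℂ := Complex.exp (2 * (π : ℂ) * Complex.I / 3)

/-- The Euclidean norm of an integer pair. -/
def znorm (m : ℤ × ℤ) : ℝ := Real.sqrt ((m.1 : ℝ) ^ 2 + (m.2 : ℝ) ^ 2)

/-- `N_bad(w) = {m ∈ ℤ² : |w + m₁v₁ + m₂v₂| = 1/√3}`. -/
def Nbad (w : V2) : Set (ℤ × ℤ) := {m | ‖w + lat m‖ = 1 / Real.sqrt 3}

/-- The `i`-th standard basis vector of `ℝ²`. -/
def basis2 (i : Fin 2) : V2 := EuclideanSpace.single i 1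

/-- Partial derivative `∂_i f` of a complex-valued function on `ℝ²`. -/
def pd (i : Fin 2) (f : V2 → ℂ) : V2 → ℂ := fun x => fderiv ℝ f x (basis2 i)

/-- The Laplacian `Δf = ∂₁²f + ∂₂²f` of a complex-valued function on `ℝ²`. -/
def lap (f : V2 → ℂ) (x : V2) : ℂ :=
  ∑ i : Fin 2, fderiv ℝ (fun y => fderiv ℝ f y (basis2 i)) x (basis2 i)

/-- The radial profile of the fundamental solution of `−Δ + 1` on `ℝ²`:
`𝒦(r) = (2π)⁻¹ e^{−r} ∫₀^∞ e^{−ζ} ζ^{−1/2} (2r + ζ)^{−1/2} dζ`. -/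
def Kker (r : ℝ) : ℝ :=
  (2 * π)⁻¹ * Real.exp (-r) *
    ∫ ζ in Set.Ioi (0 : ℝ), Real.exp (-ζ) * ζ ^ (-(1/2 : ℝ)) * (2 * r + ζ) ^ (-(1/2 : ℝ))

/-- The fundamental domain `D = {s v₁ + t v₂ : s, t ∈ [0, 1)}` of `ℝ²/Λ_h`. -/
def Dfund : Set V2 :=
  {x | ∃ s t : ℝ, s ∈ Set.Ico (0 : ℝ) 1 ∧ t ∈ Set.Ico (0 : ℝ) 1 ∧ x = s • v1 + t • v2}

/-- The Bloch Hamiltonian `H(k)f = −Δf − 2i k·∇f + |k|² f + Q f`. -/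
def Hop (Q : V2 → ℝ) (k : V2) (f : V2 → ℂ) (x : V2) : ℂ :=
  -lap f x - 2 * Complex.I * (∑ i : Fin 2, (k i : ℂ) * pd i f x) +
    (‖k‖ ^ 2 : ℝ) * f x + (Q x : ℝ) * f x

/-- The squared gradient norm `|∇Θ|²` of a real-valued function on `ℝ²`. -/
def gradNormSq (Θ : V2 → ℝ) (x : V2) : ℝ :=
  ∑ i : Fin 2, (fderiv ℝ Θ x (basis2 i)) ^ 2


/-! ### Auxiliary material for Statement 19 -/

section Aux19

open MeasureTheory Set Submodule Bornology Filter Topology Pointwise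

instance (S : Submodule ℤ V2) : VAddCommClass V2 S V2 :=
  ⟨fun a g x => by show a + (g.1 + x) = g.1 + (a + x); exact add_left_comm a g.1 x⟩

instance (S : Submodule ℤ V2) : VAddInvariantMeasure S V2 (volume : MeasureTheory.Measure V2) :=
  ⟨fun c s hs => by
    show MeasureTheory.volume ((fun x : V2 => (c : V2) + x) ⁻¹' s) = MeasureTheory.volume s
    exact MeasureTheory.measure_preimage_vadd (G := V2) (α := V2)
      (μ := MeasureTheory.volume) (c : V2) s⟩

instance (S : Submodule ℤ V2) : MeasurableVAdd S V2 :=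
  { measurable_const_vadd := fun c => by
      show Measurable fun y : V2 => (c : V2) + y
      exact measurable_id.const_add _,
    measurable_vadd_const := fun x => by
      show Measurable fun c : S => (c : V2) + x
      exact measurable_subtype_coe.add_const _ }

lemma sqrt3_pos : (0:ℝ) < Real.sqrt 3 := Real.sqrt_pos.mpr (by norm_num)

def bmat : Fin 2 → V2 := ![v1, v2]

lemma li_bmat : LinearIndependent ℝ bmat := by
  rw [linearIndependent_fin2]
  constructor
  · intro h
    have h1 := congrArg (fun v : V2 => v 1) h
    simp [bmat, v2, vec] at h1
  · intro a h
    have h0 := congrArg (fun v : V2 => v 0) h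
    have h1 := congrArg (fun v : V2 => v 1) h
    simp [bmat, v1, v2, vec, PiLp.smul_apply] at h0 h1
    nlinarith [sqrt3_pos]

def bb : Module.Basis (Fin 2) ℝ V2 :=
  basisOfLinearIndependentOfCardEqFinrank li_bmat (by simp)

lemma bb_coe : ⇑bb = bmat := coe_basisOfLinearIndependentOfCardEqFinrank _ _

lemma bb0 : bb 0 = v1 := by rw [bb_coe]; rfl
lemma bb1 : bb 1 = v2 := by rw [bb_coe]; rfl

lemma range_bb : Set.range ⇑bb = {v1, v2} := by
  rw [bb_coe]
  ext x
  constructor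
  · rintro ⟨i, rfl⟩
    fin_cases i <;> simp [bmat]
  · rintro (rfl | rfl)
    · exact ⟨0, rfl⟩
    · exact ⟨1, rfl⟩

lemma span_mem_iff {l : V2} (hl : l ∈ span ℤ (Set.range ⇑bb)) : ∃ m : ℤ × ℤ, l = lat m := by
  rw [range_bb] at hl
  rw [Submodule.mem_span_pair] at hl
  obtain ⟨a, b, hab⟩ := hl
  exact ⟨(a, b), by rw [← hab, lat]; simp [Int.cast_smul_eq_zsmul]⟩

lemma Dfund_eq : Dfund = ZSpan.fundamentalDomain bb := by
  ext x
  constructor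
  · rintro ⟨s, t, hs, ht, rfl⟩
    intro i
    rw [← bb0, ← bb1]
    fin_cases i <;>
      simp [map_add, _root_.map_smul, Module.Basis.repr_self, hs.1, hs.2, ht.1, ht.2,
        Finsupp.single_apply]
  · intro hx
    refine ⟨bb.repr x 0, bb.repr x 1, hx 0, hx 1, ?_⟩
    have := bb.sum_repr x
    rw [Fin.sum_univ_two, bb0, bb1] at this
    exact this.symm

lemma Dfund_meas : MeasurableSet Dfund := by
  rw [Dfund_eq]; exact ZSpan.fundamentalDomain_measurableSet bb

lemma Dfund_bounded : IsBounded Dfund := by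
  rw [Dfund_eq]; exact ZSpan.fundamentalDomain_isBounded bb

lemma Dfund_vol : volume Dfund < ⊤ := Dfund_bounded.measure_lt_top

lemma integrableOn_Dfund {E : Type*} [NormedAddCommGroup E] {f : V2 → E} (hf : Continuous f) :
    IntegrableOn f Dfund := by
  refine (ContinuousOn.integrableOn_compact Dfund_bounded.isCompact_closure
    hf.continuousOn).mono_set subset_closure

lemma isFD : IsAddFundamentalDomain (span ℤ (Set.range ⇑bb)) Dfund := by
  rw [Dfund_eq]; exact ZSpan.isAddFundamentalDomain bb volume

lemma per_span {α : Type*} (g : V2 → α) (hper : ∀ (x : V2) (m : ℤ × ℤ), g (x + lat m) = g x) :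
    ∀ (l : span ℤ (Set.range ⇑bb)) (x : V2), g (l +ᵥ x) = g x := by
  rintro ⟨l, hl⟩ x
  obtain ⟨m, rfl⟩ := span_mem_iff hl
  show g (lat m + x) = g x
  rw [add_comm]; exact hper x m

lemma integral_translate (g : V2 → ℂ) (hper : ∀ (x : V2) (m : ℤ × ℤ), g (x + lat m) = g x)
    (c : V2) : ∫ x in Dfund, g (x + c) = ∫ x in Dfund, g x := by
  have h1 := isFD
  have h2 : IsAddFundamentalDomain (span ℤ (Set.range ⇑bb)) (c +ᵥ Dfund) volume :=
    h1.vadd_of_comm c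
  have h3 : ∫ x in c +ᵥ Dfund, g x = ∫ x in Dfund, g x :=
    h2.setIntegral_eq h1 (per_span g hper)
  have h4 : ∫ x in Dfund, g (c +ᵥ x) = ∫ y in c +ᵥ Dfund, g y :=
    ((measurePreserving_vadd c volume).setIntegral_image_emb
      (measurableEmbedding_const_vadd c) g Dfund).symm
  have : ∀ x : V2, x + c = c +ᵥ x := fun x => add_comm x c
  simp_rw [this]
  exact h4.trans h3

lemma fderiv_per {F : Type*} [NormedAddCommGroup F] [NormedSpace ℝ F]
    (g : V2 → F) (hg : Differentiable ℝ g)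
    (hper : ∀ (x : V2) (m : ℤ × ℤ), g (x + lat m) = g x) (x : V2) (m : ℤ × ℤ) :
    fderiv ℝ g (x + lat m) = fderiv ℝ g x := by
  have hfun : (fun y => g (y + lat m)) = g := funext fun y => hper y m
  have h1 : HasFDerivAt (fun y : V2 => y + lat m) (ContinuousLinearMap.id ℝ V2) x :=
    (hasFDerivAt_id x).add_const _
  have h2 : HasFDerivAt g (fderiv ℝ g (x + lat m)) (x + lat m) := (hg _).hasFDerivAt
  have h3 : HasFDerivAt (fun y => g (y + lat m)) (fderiv ℝ g (x + lat m)) x := by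
    have h4 := h2.comp x h1
    rw [ContinuousLinearMap.comp_id] at h4
    exact h4
  calc fderiv ℝ g (x + lat m) = fderiv ℝ (fun y => g (y + lat m)) x := h3.fderiv.symm
    _ = fderiv ℝ g x := by rw [hfun]

lemma int_pd_zero (g : V2 → ℂ) (hg : ContDiff ℝ (⊤ : ℕ∞) g)
    (hper : ∀ (x : V2) (m : ℤ × ℤ), g (x + lat m) = g x) (v : V2) :
    ∫ x in Dfund, fderiv ℝ g x v = 0 := by
  have hgd : Differentiable ℝ g := hg.differentiable (by simp)
  have hdg : Continuous (fderiv ℝ g) := (hg.fderiv_right (m := (⊤ : ℕ∞)) (by simp)).continuous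
  obtain ⟨M, hM⟩ := (Dfund_bounded.isCompact_closure).exists_bound_of_continuousOn
    hdg.continuousOn
  have hMg : ∀ x : V2, ‖fderiv ℝ g x‖ ≤ M := by
    intro x
    obtain ⟨l, hl⟩ := (ZSpan.exist_unique_vadd_mem_fundamentalDomain bb x).exists
    obtain ⟨m, hm⟩ := span_mem_iff l.2
    have hlx : (l : V2) + x = x + lat m := by rw [add_comm, hm]
    have : fderiv ℝ g ((l : V2) + x) = fderiv ℝ g x := by
      rw [hlx]; exact fderiv_per g hgd hper x m
    rw [← this]
    have hmem : (l : V2) + x ∈ closure Dfund := by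
      refine subset_closure ?_
      rw [Dfund_eq]
      exact hl
    exact hM _ hmem
  set F : ℕ → V2 → ℂ := fun n x => ((n : ℝ) + 1) • (g (x + ((n : ℝ) + 1)⁻¹ • v) - g x) with hF
  have hnpos : ∀ n : ℕ, (0:ℝ) < (n:ℝ) + 1 := fun n => by positivity
  have hptw : ∀ x : V2, Tendsto (fun n => F n x) atTop (𝓝 (fderiv ℝ g x v)) := by
    intro x
    have hline : HasDerivAt (fun t : ℝ => x + t • v) v 0 := by
      simpa using ((hasDerivAt_id (0:ℝ)).smul_const v).const_add x
    have hc : HasDerivAt (fun t : ℝ => g (x + t • v)) (fderiv ℝ g x v) 0 := by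
      have := (hgd (x + (0:ℝ) • v)).hasFDerivAt.comp_hasDerivAt 0 hline
      simp only [zero_smul, add_zero] at this
      exact this
    rw [hasDerivAt_iff_tendsto_slope] at hc
    have hseq : Tendsto (fun n : ℕ => ((n:ℝ) + 1)⁻¹) atTop (𝓝[≠] (0:ℝ)) := by
      refine tendsto_nhdsWithin_of_tendsto_nhds_of_eventually_within _ ?_ ?_
      · simpa [one_div] using tendsto_one_div_add_atTop_nhds_zero_nat (𝕜 := ℝ)
      · filter_upwards with n
        exact ne_of_gt (by positivity)
    have := hc.comp hseq
    refine this.congr fun n => ?_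
    have hne : ((n:ℝ) + 1) ≠ 0 := ne_of_gt (hnpos n)
    simp only [Function.comp_apply, slope, F]
    rw [sub_zero, inv_inv]
    simp [vsub_eq_sub]
  have hIg : IntegrableOn g Dfund := integrableOn_Dfund hg.continuous
  have hIgc : ∀ c : V2, IntegrableOn (fun x => g (x + c)) Dfund :=
    fun c => integrableOn_Dfund (hg.continuous.comp (continuous_id.add continuous_const))
  have hF0 : ∀ n, ∫ x in Dfund, F n x = 0 := by
    intro n
    rw [hF]
    simp only
    rw [integral_smul, integral_sub (hIgc _) hIg, integral_translate g hper]
    simp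
  have hbd : ∀ n, ∀ᵐ x ∂(volume.restrict Dfund), ‖F n x‖ ≤ M * ‖v‖ := by
    intro n
    refine ae_of_all _ fun x => ?_
    have key : ‖g (x + ((n:ℝ)+1)⁻¹ • v) - g x‖ ≤ M * ‖(((n:ℝ)+1)⁻¹ • v)‖ := by
      have := Convex.norm_image_sub_le_of_norm_fderiv_le (f := g) (s := Set.univ)
        (fun y _ => hgd y) (fun y _ => hMg y) convex_univ (Set.mem_univ x)
        (Set.mem_univ (x + ((n:ℝ)+1)⁻¹ • v))
      simpa using this
    have hne : ((n:ℝ) + 1) ≠ 0 := ne_of_gt (hnpos n)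
    rw [hF]
    simp only [norm_smul, Real.norm_eq_abs, abs_of_pos (hnpos n)]
    calc ((n:ℝ)+1) * ‖g (x + ((n:ℝ)+1)⁻¹ • v) - g x‖
        ≤ ((n:ℝ)+1) * (M * (((n:ℝ)+1)⁻¹ * ‖v‖)) := by
          refine mul_le_mul_of_nonneg_left ?_ (le_of_lt (hnpos n))
          calc ‖g (x + ((n:ℝ)+1)⁻¹ • v) - g x‖ ≤ M * ‖(((n:ℝ)+1)⁻¹ • v)‖ := key
          _ = M * (((n:ℝ)+1)⁻¹ * ‖v‖) := by
              rw [norm_smul, Real.norm_eq_abs, abs_of_pos (by positivity)]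
      _ = M * ‖v‖ := by field_simp
  have hmeas : ∀ n, AEStronglyMeasurable (F n) (volume.restrict Dfund) := by
    intro n
    refine Continuous.aestronglyMeasurable ?_
    have hgc := hg.continuous
    simp only [F]
    fun_prop
  have hbint : Integrable (fun _ : V2 => M * ‖v‖) (volume.restrict Dfund) :=
    integrableOn_const Dfund_vol.ne
  have hdct := tendsto_integral_of_dominated_convergence (μ := volume.restrict Dfund)
    (bound := fun _ => M * ‖v‖) hmeas hbint hbd (ae_of_all _ hptw)
  have h0 : Tendsto (fun _ : ℕ => (0:ℂ)) atTop (𝓝 (∫ x in Dfund, fderiv ℝ g x v)) := by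
    simpa [hF0] using hdct
  exact tendsto_nhds_unique h0 tendsto_const_nhds

/-! ### Calculus helpers -/

variable {f g : V2 → ℂ} {x : V2} {i : Fin 2}

lemma lap_eq (f : V2 → ℂ) (x : V2) : lap f x = ∑ i : Fin 2, pd i (pd i f) x := rfl

lemma contDiff_pd (hf : ContDiff ℝ (⊤ : ℕ∞) f) (i : Fin 2) : ContDiff ℝ (⊤ : ℕ∞) (pd i f) := by
  have h := ((ContinuousLinearMap.apply ℝ ℂ (basis2 i)).contDiff (n := (⊤ : ℕ∞))).comp
    (hf.fderiv_right ((by simp)))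
  exact h

lemma contDiff_pdR {F : Type*} [NormedAddCommGroup F] [NormedSpace ℝ F] {f : V2 → F}
    (hf : ContDiff ℝ (⊤ : ℕ∞) f) (i : Fin 2) :
    ContDiff ℝ (⊤ : ℕ∞) (fun x => fderiv ℝ f x (basis2 i)) := by
  have h := ((ContinuousLinearMap.apply ℝ F (basis2 i)).contDiff (n := (⊤ : ℕ∞))).comp
    (hf.fderiv_right ((by simp)))
  exact h

lemma pd_add (hf : DifferentiableAt ℝ f x) (hg : DifferentiableAt ℝ g x) :
    pd i (fun y => f y + g y) x = pd i f x + pd i g x := by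
  simp [pd, fderiv_fun_add hf hg]

lemma pd_sub (hf : DifferentiableAt ℝ f x) (hg : DifferentiableAt ℝ g x) :
    pd i (fun y => f y - g y) x = pd i f x - pd i g x := by
  simp [pd, fderiv_fun_sub hf hg]

lemma pd_neg : pd i (fun y => -f y) x = -pd i f x := by
  simp [pd, fderiv_neg]

lemma pd_const_mul (c : ℂ) (hf : DifferentiableAt ℝ f x) :
    pd i (fun y => c * f y) x = c * pd i f x := by
  simp [pd, fderiv_const_mul hf c]

lemma pd_mul (hf : DifferentiableAt ℝ f x) (hg : DifferentiableAt ℝ g x) :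
    pd i (fun y => f y * g y) x = pd i f x * g x + f x * pd i g x := by
  simp only [pd, fderiv_fun_mul hf hg]
  simp [smul_eq_mul]
  ring

lemma pd_conj (hf : DifferentiableAt ℝ f x) :
    pd i (fun y => (starRingEnd ℂ) (f y)) x = (starRingEnd ℂ) (pd i f x) := by
  have h : HasFDerivAt (fun y => (Complex.conjCLE : ℂ →L[ℝ] ℂ) (f y))
      ((Complex.conjCLE : ℂ →L[ℝ] ℂ).comp (fderiv ℝ f x)) x :=
    (Complex.conjCLE : ℂ →L[ℝ] ℂ).hasFDerivAt.comp x hf.hasFDerivAt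
  have h2 := h.fderiv
  simp only [pd]
  rw [show (fun y => (starRingEnd ℂ) (f y)) = fun y => (Complex.conjCLE : ℂ →L[ℝ] ℂ) (f y)
    from rfl, h2]
  rfl

lemma contDiff_conj (hf : ContDiff ℝ (⊤ : ℕ∞) f) : ContDiff ℝ (⊤ : ℕ∞) (fun y => (starRingEnd ℂ) (f y)) := by
  have h := ((Complex.conjCLE : ℂ →L[ℝ] ℂ).contDiff (n := (⊤ : ℕ∞))).comp hf
  exact h

lemma pd_ofReal {Θ : V2 → ℝ} (hf : DifferentiableAt ℝ Θ x) :
    pd i (fun y => ((Θ y : ℝ) : ℂ)) x = ((fderiv ℝ Θ x (basis2 i) : ℝ) : ℂ) := by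
  have h : HasFDerivAt (fun y => Complex.ofRealCLM (Θ y))
      (Complex.ofRealCLM.comp (fderiv ℝ Θ x)) x :=
    Complex.ofRealCLM.hasFDerivAt.comp x hf.hasFDerivAt
  have h2 := h.fderiv
  simp only [pd]
  rw [show (fun y => ((Θ y : ℝ) : ℂ)) = fun y => Complex.ofRealCLM (Θ y) from rfl, h2]
  rfl

lemma contDiff_ofReal {Θ : V2 → ℝ} (hf : ContDiff ℝ (⊤ : ℕ∞) Θ) :
    ContDiff ℝ (⊤ : ℕ∞) (fun y => ((Θ y : ℝ) : ℂ)) := by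
  have h := (Complex.ofRealCLM.contDiff (n := (⊤ : ℕ∞))).comp hf
  exact h

lemma cont_Hop {Q : V2 → ℝ} (hQ : Continuous Q) (k : V2) (hf : ContDiff ℝ (⊤ : ℕ∞) f) :
    Continuous (Hop Q k f) := by
  have h1 : Continuous fun x => lap f x := by
    have heq : (fun x => lap f x) = fun x => ∑ i : Fin 2, pd i (pd i f) x := rfl
    rw [heq]
    exact continuous_finset_sum _ fun i _ => (contDiff_pd (contDiff_pd hf i) i).continuous
  have h2 : Continuous fun x => ∑ i : Fin 2, (k i : ℂ) * pd i f x :=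
    continuous_finset_sum _ fun i _ => continuous_const.mul (contDiff_pd hf i).continuous
  exact ((h1.neg.sub (continuous_const.mul h2)).add
    (continuous_const.mul hf.continuous)).add
    ((Complex.continuous_ofReal.comp hQ).mul hf.continuous)

lemma normsq_cast (z : ℂ) : ((‖z‖ ^ 2 : ℝ) : ℂ) = (starRingEnd ℂ) z * z := by
  rw [Complex.sq_norm]
  rw [mul_comm, Complex.mul_conj]

/-- The auxiliary vector field whose divergence realizes the discrepancy. -/
def Gfun (k : V2) (Θ : V2 → ℝ) (φ : V2 → ℂ) (i : Fin 2) : V2 → ℂ := fun x =>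
  -(((Θ x : ℝ) : ℂ) * ((fderiv ℝ Θ x (basis2 i) : ℝ) : ℂ) * ((starRingEnd ℂ) (φ x) * φ x)) +
    Complex.I * ((k i : ℝ) : ℂ) *
      (((Θ x : ℝ) : ℂ) * ((Θ x : ℝ) : ℂ) * ((starRingEnd ℂ) (φ x) * φ x)) +
    (1 / 2 : ℂ) * (((Θ x : ℝ) : ℂ) * ((Θ x : ℝ) : ℂ) *
      ((starRingEnd ℂ) (φ x) * pd i φ x - (starRingEnd ℂ) (pd i φ x) * φ x))

lemma Gfun_contDiff (k : V2) {Θ : V2 → ℝ} (hΘ : ContDiff ℝ (⊤ : ℕ∞) Θ) {φ : V2 → ℂ}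
    (hφ : ContDiff ℝ (⊤ : ℕ∞) φ) (i : Fin 2) : ContDiff ℝ (⊤ : ℕ∞) (Gfun k Θ φ i) := by
  have hT := contDiff_ofReal hΘ
  have hti := contDiff_ofReal (contDiff_pdR hΘ i)
  have hu : ContDiff ℝ (⊤ : ℕ∞) (fun x => (starRingEnd ℂ) (φ x) * φ x) := (contDiff_conj hφ).mul hφ
  have hw : ContDiff ℝ (⊤ : ℕ∞) (fun x =>
      (starRingEnd ℂ) (φ x) * pd i φ x - (starRingEnd ℂ) (pd i φ x) * φ x) :=
    ((contDiff_conj hφ).mul (contDiff_pd hφ i)).sub ((contDiff_conj (contDiff_pd hφ i)).mul hφ)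
  exact (((hT.mul hti).mul hu).neg.add (contDiff_const.mul ((hT.mul hT).mul hu))).add
    (contDiff_const.mul ((hT.mul hT).mul hw))

lemma pd_per {f : V2 → ℂ} (hf : Differentiable ℝ f)
    (hper : ∀ (x : V2) (m : ℤ × ℤ), f (x + lat m) = f x) (i : Fin 2) (x : V2) (m : ℤ × ℤ) :
    pd i f (x + lat m) = pd i f x := by
  show fderiv ℝ f (x + lat m) (basis2 i) = fderiv ℝ f x (basis2 i)
  rw [fderiv_per f hf hper x m]

lemma Gfun_per (k : V2) {Θ : V2 → ℝ} (hΘ : ContDiff ℝ (⊤ : ℕ∞) Θ)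
    (hΘper : ∀ (x : V2) (m : ℤ × ℤ), Θ (x + lat m) = Θ x) {φ : V2 → ℂ}
    (hφ : ContDiff ℝ (⊤ : ℕ∞) φ) (hφper : ∀ (x : V2) (m : ℤ × ℤ), φ (x + lat m) = φ x) (i : Fin 2) :
    ∀ (x : V2) (m : ℤ × ℤ), Gfun k Θ φ i (x + lat m) = Gfun k Θ φ i x := by
  intro x m
  have h1 : fderiv ℝ Θ (x + lat m) = fderiv ℝ Θ x :=
    fderiv_per Θ (hΘ.differentiable (by simp)) hΘper x m
  have h2 : pd i φ (x + lat m) = pd i φ x :=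
    pd_per (hφ.differentiable (by simp)) hφper i x m
  simp only [Gfun, hΘper x m, hφper x m, h1, h2]

end Aux19

section Pointwise19

open Complex

lemma pointwise19 (Q : V2 → ℝ) (k : V2) {Θ : V2 → ℝ} (hΘ : ContDiff ℝ (⊤ : ℕ∞) Θ)
    {φ : V2 → ℂ} (hφ : ContDiff ℝ (⊤ : ℕ∞) φ) (x : V2) :
    (starRingEnd ℂ) (Hop Q k (fun y => ((Θ y : ℝ) : ℂ) * φ y) x) * (((Θ x : ℝ) : ℂ) * φ x) =
      (((Θ x : ℝ) : ℂ) ^ 2 * (starRingEnd ℂ) (Hop Q k φ x) * φ x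
        + (starRingEnd ℂ) (((Θ x : ℝ) : ℂ) ^ 2 * (starRingEnd ℂ) (Hop Q k φ x) * φ x)) / 2
      + ((gradNormSq Θ x * ‖φ x‖ ^ 2 : ℝ) : ℂ)
      + ∑ i : Fin 2, pd i (Gfun k Θ φ i) x := by
  have hΘd : Differentiable ℝ Θ := hΘ.differentiable (by simp)
  have hφd : Differentiable ℝ φ := hφ.differentiable (by simp)
  have hθ : ∀ i : Fin 2, ContDiff ℝ (⊤ : ℕ∞) (fun y => fderiv ℝ Θ y (basis2 i)) :=
    fun i => contDiff_pdR hΘ i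
  have dT : ∀ y, DifferentiableAt ℝ (fun v => ((Θ v : ℝ) : ℂ)) y :=
    fun y => (contDiff_ofReal hΘ).differentiable (by simp) y
  have dt : ∀ (i : Fin 2) (y : V2),
      DifferentiableAt ℝ (fun v => ((fderiv ℝ Θ v (basis2 i) : ℝ) : ℂ)) y :=
    fun i y => (contDiff_ofReal (hθ i)).differentiable (by simp) y
  have dφ : ∀ y, DifferentiableAt ℝ φ y := fun y => hφd y
  have dφi : ∀ (i : Fin 2) (y : V2), DifferentiableAt ℝ (pd i φ) y :=
    fun i y => (contDiff_pd hφ i).differentiable (by simp) y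
  have dcφ : ∀ y, DifferentiableAt ℝ (fun v => (starRingEnd ℂ) (φ v)) y :=
    fun y => (contDiff_conj hφ).differentiable (by simp) y
  have dcφi : ∀ (i : Fin 2) (y : V2),
      DifferentiableAt ℝ (fun v => (starRingEnd ℂ) (pd i φ v)) y :=
    fun i y => (contDiff_conj (contDiff_pd hφ i)).differentiable (by simp) y
  -- function-level first derivative of Θ·φ
  have E1 : ∀ i : Fin 2, pd i (fun v => ((Θ v : ℝ) : ℂ) * φ v)
      = fun y => ((fderiv ℝ Θ y (basis2 i) : ℝ) : ℂ) * φ y + ((Θ y : ℝ) : ℂ) * pd i φ y := by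
    intro i; funext y
    rw [pd_mul (dT y) (dφ y), pd_ofReal (hΘd y)]
  -- differentiability of composite pieces (with explicitly ascribed types)
  have dU : ∀ y, DifferentiableAt ℝ (fun v => (starRingEnd ℂ) (φ v) * φ v) y :=
    fun y => (dcφ y).mul (dφ y)
  have dW : ∀ (i : Fin 2) (y : V2), DifferentiableAt ℝ
      (fun v => (starRingEnd ℂ) (φ v) * pd i φ v - (starRingEnd ℂ) (pd i φ v) * φ v) y :=
    fun i y => ((dcφ y).mul (dφi i y)).sub ((dcφi i y).mul (dφ y))
  have dA : ∀ (i : Fin 2), DifferentiableAt ℝ (fun v =>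
      -(((Θ v : ℝ) : ℂ) * ((fderiv ℝ Θ v (basis2 i) : ℝ) : ℂ) *
        ((starRingEnd ℂ) (φ v) * φ v))) x :=
    fun i => (((dT x).mul (dt i x)).mul (dU x)).neg
  have dB : ∀ (i : Fin 2), DifferentiableAt ℝ (fun v =>
      Complex.I * ((k i : ℝ) : ℂ) * (((Θ v : ℝ) : ℂ) * ((Θ v : ℝ) : ℂ) *
        ((starRingEnd ℂ) (φ v) * φ v))) x :=
    fun i => (((dT x).mul (dT x)).mul (dU x)).const_mul _
  have dC : ∀ (i : Fin 2), DifferentiableAt ℝ (fun v =>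
      (1 / 2 : ℂ) * (((Θ v : ℝ) : ℂ) * ((Θ v : ℝ) : ℂ) *
        ((starRingEnd ℂ) (φ v) * pd i φ v - (starRingEnd ℂ) (pd i φ v) * φ v))) x :=
    fun i => (((dT x).mul (dT x)).mul (dW i x)).const_mul _
  have hop_eq : ∀ f : V2 → ℂ, Hop Q k f x
      = -(∑ i : Fin 2, pd i (pd i f) x)
        - 2 * Complex.I * (∑ i : Fin 2, ((k i : ℝ) : ℂ) * pd i f x)
        + ((‖k‖ ^ 2 : ℝ) : ℂ) * f x + ((Q x : ℝ) : ℂ) * f x := fun f => rfl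
  have egrad : ((gradNormSq Θ x * ‖φ x‖ ^ 2 : ℝ) : ℂ)
      = (((fderiv ℝ Θ x (basis2 0) : ℝ) : ℂ) * ((fderiv ℝ Θ x (basis2 0) : ℝ) : ℂ)
          + ((fderiv ℝ Θ x (basis2 1) : ℝ) : ℂ) * ((fderiv ℝ Θ x (basis2 1) : ℝ) : ℂ))
        * ((starRingEnd ℂ) (φ x) * φ x) := by
    rw [← normsq_cast (φ x)]
    rw [show (gradNormSq Θ x : ℝ) = fderiv ℝ Θ x (basis2 0) * fderiv ℝ Θ x (basis2 0)
        + fderiv ℝ Θ x (basis2 1) * fderiv ℝ Θ x (basis2 1) by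
      simp [gradNormSq, Fin.sum_univ_two, sq]]
    push_cast
    ring
  have hGf : ∀ i : Fin 2, Gfun k Θ φ i = fun v =>
      -(((Θ v : ℝ) : ℂ) * ((fderiv ℝ Θ v (basis2 i) : ℝ) : ℂ) *
          ((starRingEnd ℂ) (φ v) * φ v)) +
        Complex.I * ((k i : ℝ) : ℂ) *
          (((Θ v : ℝ) : ℂ) * ((Θ v : ℝ) : ℂ) * ((starRingEnd ℂ) (φ v) * φ v)) +
        (1 / 2 : ℂ) * (((Θ v : ℝ) : ℂ) * ((Θ v : ℝ) : ℂ) *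
          ((starRingEnd ℂ) (φ v) * pd i φ v - (starRingEnd ℂ) (pd i φ v) * φ v)) :=
    fun i => rfl
  rw [egrad]
  simp only [hop_eq, hGf, Fin.sum_univ_two]
  simp only [E1 0, E1 1]
  simp only [pd_add ((dt 0 x).fun_mul (dφ x)) ((dT x).fun_mul (dφi 0 x)),
    pd_add ((dt 1 x).fun_mul (dφ x)) ((dT x).fun_mul (dφi 1 x)),
    pd_add ((dA 0).fun_add (dB 0)) (dC 0), pd_add ((dA 1).fun_add (dB 1)) (dC 1),
    pd_add (dA 0) (dB 0), pd_add (dA 1) (dB 1),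
    pd_neg,
    pd_const_mul (Complex.I * ((k 0 : ℝ) : ℂ)) (((dT x).fun_mul (dT x)).fun_mul (dU x)),
    pd_const_mul (Complex.I * ((k 1 : ℝ) : ℂ)) (((dT x).fun_mul (dT x)).fun_mul (dU x)),
    pd_const_mul ((1 : ℂ) / 2) (((dT x).fun_mul (dT x)).fun_mul (dW 0 x)),
    pd_const_mul ((1 : ℂ) / 2) (((dT x).fun_mul (dT x)).fun_mul (dW 1 x)),
    pd_mul ((dT x).fun_mul (dt 0 x)) (dU x), pd_mul ((dT x).fun_mul (dt 1 x)) (dU x),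
    pd_mul ((dT x).fun_mul (dT x)) (dU x),
    pd_mul ((dT x).fun_mul (dT x)) (dW 0 x), pd_mul ((dT x).fun_mul (dT x)) (dW 1 x),
    pd_mul (dT x) (dt 0 x), pd_mul (dT x) (dt 1 x),
    pd_mul (dT x) (dT x),
    pd_mul (dt 0 x) (dφ x), pd_mul (dt 1 x) (dφ x),
    pd_mul (dT x) (dφi 0 x), pd_mul (dT x) (dφi 1 x),
    pd_mul (dcφ x) (dφ x),
    pd_sub ((dcφ x).fun_mul (dφi 0 x)) ((dcφi 0 x).fun_mul (dφ x)),
    pd_sub ((dcφ x).fun_mul (dφi 1 x)) ((dcφi 1 x).fun_mul (dφ x)),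
    pd_mul (dcφ x) (dφi 0 x), pd_mul (dcφ x) (dφi 1 x),
    pd_mul (dcφi 0 x) (dφ x), pd_mul (dcφi 1 x) (dφ x),
    pd_conj (dφ x), pd_conj (dφi 0 x), pd_conj (dφi 1 x),
    pd_ofReal (hΘd x),
    pd_ofReal ((hθ 0).differentiable (by simp) x), pd_ofReal ((hθ 1).differentiable (by simp) x)]
  simp only [map_add, map_sub, map_mul, map_neg, map_div₀, Complex.conj_conj,
    Complex.conj_ofReal, Complex.conj_I, map_ofNat, map_one, map_pow]
  ring

end Pointwise19

/-- (Integration by parts.)  For `Λ_h`-periodic data,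
`∫_D conj(H(k)(Θφ)) (Θφ) = Re(∫_D Θ² conj(H(k)φ) φ) + ∫_D |∇Θ|² |φ|²`. -/
theorem statement19 (Q : V2 → ℝ) (hQc : Continuous Q)
    (hQper : ∀ x : V2, ∀ m : ℤ × ℤ, Q (x + lat m) = Q x)
    (k : V2) (Θ : V2 → ℝ) (hΘ : ContDiff ℝ (⊤ : ℕ∞) Θ)
    (hΘper : ∀ x : V2, ∀ m : ℤ × ℤ, Θ (x + lat m) = Θ x)
    (φ : V2 → ℂ) (hφ : ContDiff ℝ (⊤ : ℕ∞) φ)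
    (hφper : ∀ x : V2, ∀ m : ℤ × ℤ, φ (x + lat m) = φ x) :
    ∫ x in Dfund, (starRingEnd ℂ) (Hop Q k (fun y => (Θ y : ℂ) * φ y) x) * ((Θ x : ℂ) * φ x) =
      (((∫ x in Dfund,
          ((Θ x : ℂ)) ^ 2 * (starRingEnd ℂ) (Hop Q k φ x) * φ x).re : ℝ) : ℂ) +
        ((∫ x in Dfund, gradNormSq Θ x * ‖φ x‖ ^ 2 : ℝ) : ℂ) := by
  open MeasureTheory in
  have hG : ∀ i : Fin 2, ContDiff ℝ (⊤ : ℕ∞) (Gfun k Θ φ i) := fun i => Gfun_contDiff k hΘ hφ i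
  have hGper : ∀ i : Fin 2, ∀ (x : V2) (m : ℤ × ℤ),
      Gfun k Θ φ i (x + lat m) = Gfun k Θ φ i x := fun i => Gfun_per k hΘ hΘper hφ hφper i
  have hcψ : Continuous (fun y => ((Θ y : ℝ) : ℂ) * φ y) :=
    ((contDiff_ofReal hΘ).mul hφ).continuous
  have hHψ : Continuous (Hop Q k (fun y => ((Θ y : ℝ) : ℂ) * φ y)) :=
    cont_Hop hQc k ((contDiff_ofReal hΘ).mul hφ)
  have hHφ : Continuous (Hop Q k φ) := cont_Hop hQc k hφ
  have hstar : Continuous fun z : ℂ => (starRingEnd ℂ) z :=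
    (Complex.conjCLE : ℂ →L[ℝ] ℂ).continuous
  have hzc : Continuous fun x => ((Θ x : ℝ) : ℂ) ^ 2 * (starRingEnd ℂ) (Hop Q k φ x) * φ x :=
    (((contDiff_ofReal hΘ).continuous.pow 2).mul (hstar.comp hHφ)).mul hφ.continuous
  have hiz : IntegrableOn
      (fun x => ((Θ x : ℝ) : ℂ) ^ 2 * (starRingEnd ℂ) (Hop Q k φ x) * φ x) Dfund :=
    integrableOn_Dfund hzc
  have hizc : IntegrableOn (fun x => (starRingEnd ℂ)
      (((Θ x : ℝ) : ℂ) ^ 2 * (starRingEnd ℂ) (Hop Q k φ x) * φ x)) Dfund :=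
    integrableOn_Dfund (hstar.comp hzc)
  have hgradc : Continuous (gradNormSq Θ) := by
    have heq : gradNormSq Θ = fun x => ∑ i : Fin 2, (fderiv ℝ Θ x (basis2 i)) ^ 2 := rfl
    rw [heq]
    exact continuous_finset_sum _ fun i _ => ((contDiff_pdR hΘ i).continuous.pow 2)
  have hiB : IntegrableOn (fun x => ((gradNormSq Θ x * ‖φ x‖ ^ 2 : ℝ) : ℂ)) Dfund :=
    integrableOn_Dfund (Complex.continuous_ofReal.comp
      (hgradc.mul (hφ.continuous.norm.pow 2)))
  have hiG : ∀ i : Fin 2, IntegrableOn (fun x => pd i (Gfun k Θ φ i) x) Dfund :=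
    fun i => integrableOn_Dfund (contDiff_pd (hG i) i).continuous
  have hG0 : ∀ i ∈ Finset.univ, (∫ x in Dfund, pd i (Gfun k Θ φ i) x) = 0 :=
    fun i _ => int_pd_zero _ (hG i) (hGper i) (basis2 i)
  calc ∫ x in Dfund, (starRingEnd ℂ) (Hop Q k (fun y => (Θ y : ℂ) * φ y) x) * ((Θ x : ℂ) * φ x)
      = ∫ x in Dfund,
        ((((Θ x : ℝ) : ℂ) ^ 2 * (starRingEnd ℂ) (Hop Q k φ x) * φ x
          + (starRingEnd ℂ) (((Θ x : ℝ) : ℂ) ^ 2 * (starRingEnd ℂ) (Hop Q k φ x) * φ x)) / 2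
        + ((gradNormSq Θ x * ‖φ x‖ ^ 2 : ℝ) : ℂ)
        + ∑ i : Fin 2, pd i (Gfun k Θ φ i) x) :=
      integral_congr_ae (Filter.Eventually.of_forall fun x => pointwise19 Q k hΘ hφ x)
    _ = (((∫ x in Dfund,
          ((Θ x : ℂ)) ^ 2 * (starRingEnd ℂ) (Hop Q k φ x) * φ x).re : ℝ) : ℂ) +
        ((∫ x in Dfund, gradNormSq Θ x * ‖φ x‖ ^ 2 : ℝ) : ℂ) := by
      have h1 : IntegrableOn (fun x =>
          (((Θ x : ℝ) : ℂ) ^ 2 * (starRingEnd ℂ) (Hop Q k φ x) * φ x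
            + (starRingEnd ℂ) (((Θ x : ℝ) : ℂ) ^ 2 * (starRingEnd ℂ) (Hop Q k φ x) * φ x)) / 2)
          Dfund := by
        exact (hiz.add hizc).div_const 2
      have h12 : IntegrableOn (fun x =>
          (((Θ x : ℝ) : ℂ) ^ 2 * (starRingEnd ℂ) (Hop Q k φ x) * φ x
            + (starRingEnd ℂ) (((Θ x : ℝ) : ℂ) ^ 2 * (starRingEnd ℂ) (Hop Q k φ x) * φ x)) / 2
          + ((gradNormSq Θ x * ‖φ x‖ ^ 2 : ℝ) : ℂ)) Dfund := by
        exact h1.add hiB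
      have h3 : IntegrableOn (fun x => ∑ i : Fin 2, pd i (Gfun k Θ φ i) x) Dfund := by
        exact integrable_finset_sum _ fun i _ => hiG i
      rw [integral_add h12 h3,
        integral_add h1 hiB,
        integral_finset_sum _ (fun i _ => hiG i), Finset.sum_eq_zero hG0, add_zero,
        integral_div, integral_add hiz hizc, integral_conj, Complex.add_conj,
        show (∫ a in Dfund, ((gradNormSq Θ a * ‖φ a‖ ^ 2 : ℝ) : ℂ))
          = (((∫ a in Dfund, gradNormSq Θ a * ‖φ a‖ ^ 2 : ℝ)) : ℂ) from integral_ofReal]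
      push_cast
      ring
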